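/- Let E^x_w be the set of indices i such that the i-th x in w is immediately followed by a y, and for T ⊆ E^x_w let ψ^x_T w be the word obtained by replacing each such xy (for i in T) by yx. Define Q_- w = Σ_{T ⊆ E^x_w} (−1)^{|T|} ψ^x_T w. Then for all words w, w0 in M_{n_x,n_y}: ⟨Q_- w | w0⟩ = 1 if w = w0 and 0 otherwise. Equivalently, Q_- intertwines the forms: u · v = ⟨Q_- u | v⟩. -/

import Mathlib

open scoped Classical

/-- Words over the two-letter alphabet {x,y}; `false` is `x`, `true` is `y`. -/
abbrev Word := List Bool

/-- 0-indexed positions of the x's (`false`) in a word. -/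
def xIdx (w : Word) : List ℕ :=
  (List.range w.length).filter (fun j => w.getD j true = false)

/-- 0-indexed positions of the y's (`true`) in a word. -/
def yIdx (w : Word) : List ℕ :=
  (List.range w.length).filter (fun j => w.getD j false = true)

/-- `fX w i` = number of y's strictly left of the i-th x of `w` (i is 0-indexed). -/
def fX (w : Word) (i : ℕ) : ℕ := (xIdx w).getD i 0 - i

/-- `fY w j` = number of x's strictly left of the j-th y of `w` (j is 0-indexed). -/
def fY (w : Word) (j : ℕ) : ℕ := (yIdx w).getD j 0 - j

/-- `hX w i` = (1-indexed) position of the i-th x of `w` (i is 0-indexed). -/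
def hX (w : Word) (i : ℕ) : ℕ := (xIdx w).getD i 0 + 1

/-- The pawn-move partial order: same letter counts, and each x of `w0` lies at a
position at most that of the corresponding x of `w1`. -/
def wle (w0 w1 : Word) : Prop :=
  w0.count false = w1.count false ∧ w0.count true = w1.count true ∧
  ∀ i < w0.count false, (xIdx w0).getD i 0 ≤ (xIdx w1).getD i 0

/-- Creation operator `a*_{s,i}` on words: `i = 0` prepends `s`; `1 ≤ i ≤ n_s`
replaces the i-th `s` by `ss`; `i = n_s + 1` appends `s`. -/
def create (s : Bool) : ℕ → Word → Word
  | 0, w => s :: w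
  | _+1, [] => [s]
  | i+1, a :: w =>
    if a = s then (if i = 0 then s :: s :: w else a :: create s i w)
    else a :: create s (i+1) w

/-- Delete the i-th occurrence (1-indexed) of `s`. -/
def delNth (s : Bool) : ℕ → Word → Word
  | _, [] => []
  | i, a :: w => if a = s then (if i ≤ 1 then w else a :: delNth s (i-1) w)
                 else a :: delNth s i w

/-- Annihilation operator `a_{s,i}` on words: `i = 0` deletes an initial `s` (else 0);
`1 ≤ i ≤ n_s` deletes the i-th `s`; `i = n_s + 1` deletes a final `s` (else 0). -/
def annih (s : Bool) (i : ℕ) (w : Word) : Option Word :=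
  if i = 0 then
    match w with
    | a :: t => if a = s then some t else none
    | [] => none
  else if i ≤ w.count s then some (delNth s i w)
  else if i = w.count s + 1 then
    if w.getLast? = some s then some w.dropLast else none
  else none

/-- The free ℤ-module on words: the Fock space `F`. -/
abbrev FS := Word →₀ ℤ

/-- Basis vector of a word. -/
noncomputable def δ (w : Word) : FS := Finsupp.single w 1

/-- `0` for `none`, basis vector for `some`. -/
noncomputable def optδ (o : Option Word) : FS := o.elim 0 δ

/-- Extend a word-indexed family of vectors to a linear map on `FS`. -/
noncomputable def opOf (g : Word → FS) : FS →ₗ[ℤ] FS := Finsupp.lift FS ℤ Word g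

/-- Creation operator as a linear map. -/
noncomputable def Cr (s : Bool) (i : ℕ) : FS →ₗ[ℤ] FS := opOf (fun w => δ (create s i w))

/-- Annihilation operator as a linear map. -/
noncomputable def An (s : Bool) (i : ℕ) : FS →ₗ[ℤ] FS := opOf (fun w => optδ (annih s i w))

/-- Boolean bilinear form on words: `1` if `w0 ≤ w1` in the pawn-move order, else `0`. -/
noncomputable def pairW (w0 w1 : Word) : ℤ := if wle w0 w1 then 1 else 0

/-- Bilinear extension of `pairW` to the free module. -/
noncomputable def pairF (u v : FS) : ℤ :=
  u.sum fun w0 a => v.sum fun w1 b => a * b * pairW w0 w1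

/-- Kronecker delta form on words. -/
noncomputable def dotW (w0 w1 : Word) : ℤ := if w0 = w1 then 1 else 0

/-- Bilinear extension of `dotW`: words form an orthonormal basis. -/
noncomputable def dotF (u v : FS) : ℤ :=
  u.sum fun w0 a => v.sum fun w1 b => a * b * dotW w0 w1

/-- All words of a given length. -/
noncomputable def wordsOfLen (n : ℕ) : Finset Word :=
  (Finset.univ : Finset (Fin n → Bool)).image List.ofFn

/-- Swap `xy → yx` at the x's whose (0-indexed) number lies in `T`;
the counter `k` records how many x's have been passed. -/
def psiX (T : Finset ℕ) : Word → ℕ → Word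
  | [], _ => []
  | false :: true :: w, k =>
      if k ∈ T then true :: false :: psiX T w (k+1)
      else false :: psiX T (true :: w) (k+1)
  | false :: w, k => false :: psiX T w (k+1)
  | true :: w, k => true :: psiX T w k
  termination_by w _ => w.length
  decreasing_by all_goals (simp <;> omega)

/-- Swap `yx → xy` at the y's whose (0-indexed) number lies in `T`. -/
def psiY (T : Finset ℕ) : Word → ℕ → Word
  | [], _ => []
  | true :: false :: w, k =>
      if k ∈ T then false :: true :: psiY T w (k+1)
      else true :: psiY T (false :: w) (k+1)
  | true :: w, k => true :: psiY T w (k+1)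
  | false :: w, k => false :: psiY T w k
  termination_by w _ => w.length
  decreasing_by all_goals (simp <;> omega)

/-- `Ex w`: 0-indexed numbers of the x's of `w` immediately followed by a y. -/
noncomputable def Ex (w : Word) : Finset ℕ :=
  (Finset.range (w.count false)).filter
    (fun i => w.getD ((xIdx w).getD i 0 + 1) false = true)

/-- `Ey w`: 0-indexed numbers of the y's of `w` immediately followed by an x. -/
noncomputable def Ey (w : Word) : Finset ℕ :=
  (Finset.range (w.count true)).filter
    (fun i => w.getD ((yIdx w).getD i 0 + 1) true = false)

/-- `Q_- w = Σ_{T ⊆ E^x_w} (−1)^{|T|} ψ^x_T w` on a word. -/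
noncomputable def QminusW (w : Word) : FS :=
  ∑ T ∈ (Ex w).powerset, ((-1 : ℤ)^T.card) • δ (psiX T w 0)

/-- `Q_-` extended linearly. -/
noncomputable def Qminus : FS →ₗ[ℤ] FS := opOf QminusW

/-!
For `T ⊆ E^x_w`, the word `ψ^x_T w` is `w` with the `i`-th x moved one step to the right for
each `i ∈ T`. Hence `ψ^x_T w ≤ w0` iff `w ≤ w0` and every `i ∈ T` is an x of `w` lying strictly
left of the `i`-th x of `w0`; call the set of such `i ∈ E^x_w` `ExBelow w w0`. So
`⟨Q_- w | w0⟩ = Σ_{T ⊆ ExBelow w w0} (-1)^|T|`, which is `1` if `ExBelow w w0 = ∅` and `0`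
otherwise. If `w < w0`, the last x of `w` strictly left of its counterpart in `w0` is followed by
a y (an x there would be the next x, again strictly left of its counterpart), so
`ExBelow w w0 ≠ ∅`. The identity `u · v = ⟨Q_- u | v⟩` is the bilinear extension.
-/

theorem List.map_mapIdx {α β γ : Type*} (f : ℕ → α → β) (g : β → γ) (l : List α) :
    (l.mapIdx f).map g = l.mapIdx fun i a => g (f i a) :=
  List.ext_getElem (by simp) (by simp)

theorem List.mapIdx_map {α β γ : Type*} (f : ℕ → β → γ) (g : α → β) (l : List α) :
    (l.map g).mapIdx f = l.mapIdx fun i a => f i (g a) :=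
  List.ext_getElem (by simp) (by simp)

theorem xIdx_cons (a : Bool) (w : Word) :
    xIdx (a :: w) = (if a = false then [0] else []) ++ (xIdx w).map (· + 1) := by
  unfold xIdx
  rw [List.length_cons, List.range_succ_eq_map, List.filter_cons, List.filter_map]
  cases a <;> simp [Function.comp_def]

theorem length_xIdx (w : Word) : (xIdx w).length = w.count false := by
  induction w with
  | nil => rfl
  | cons a w ih => cases a <;> simp [xIdx_cons, ih]

theorem mem_xIdx {w : Word} {p : ℕ} : p ∈ xIdx w ↔ p < w.length ∧ w.getD p true = false := by
  simp [xIdx]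

theorem getD_xIdx_mem {w : Word} {i : ℕ} (hi : i < w.count false) :
    (xIdx w).getD i 0 ∈ xIdx w := by
  rw [List.getD_eq_getElem _ _ (by rwa [length_xIdx])]
  exact List.getElem_mem _

theorem getD_xIdx_lt_getD_xIdx {w : Word} {i j : ℕ} (hij : i < j) (hj : j < w.count false) :
    (xIdx w).getD i 0 < (xIdx w).getD j 0 := by
  rw [← length_xIdx] at hj
  rw [List.getD_eq_getElem _ _ (hij.trans hj), List.getD_eq_getElem _ _ hj]
  exact List.pairwise_iff_getElem.1
    ((List.pairwise_lt_range).sublist List.filter_sublist) i j (hij.trans hj) hj hij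

theorem getD_xIdx_succ_of_mem {w : Word} {i : ℕ} (hi : i < w.count false)
    (hmem : (xIdx w).getD i 0 + 1 ∈ xIdx w) :
    i + 1 < w.count false ∧ (xIdx w).getD (i + 1) 0 = (xIdx w).getD i 0 + 1 := by
  obtain ⟨j, hj, hje⟩ := List.mem_iff_getElem.1 hmem
  rw [← List.getD_eq_getElem _ 0 hj, length_xIdx] at *
  have hij : i < j := by
    by_contra! h
    have : (xIdx w).getD j 0 ≤ (xIdx w).getD i 0 :=
      h.lt_or_eq.elim (fun h => (getD_xIdx_lt_getD_xIdx h hi).le) (fun h => h ▸ le_rfl)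
    omega
  obtain rfl | hij' := (show i + 1 ≤ j from hij).eq_or_lt
  · exact ⟨hj, hje⟩
  · have := getD_xIdx_lt_getD_xIdx (lt_add_one i) (hij'.trans hj)
    have := getD_xIdx_lt_getD_xIdx hij' hj
    omega

theorem eq_of_xIdx_eq {w w' : Word} (hlen : w.length = w'.length) (h : xIdx w = xIdx w') :
    w = w' := by
  refine List.ext_getElem hlen fun p hp hp' => ?_
  have := congrArg (p ∈ ·) h
  simp only [mem_xIdx, List.getD_eq_getElem _ _ hp, List.getD_eq_getElem _ _ hp', hp, hp',
    true_and, eq_iff_iff] at this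
  cases hb : w[p] <;> cases hb' : w'[p] <;> simp_all

theorem count_psiX (T : Finset ℕ) (b : Bool) (w : Word) (k : ℕ) :
    (psiX T w k).count b = w.count b := by
  induction w, k using psiX.induct T with
  | case4 w k hw ih => cases b <;> simp_all [psiX.eq_3 T k w hw]
  | _ => cases b <;> simp_all [psiX]

theorem xIdx_psiX (T : Finset ℕ) (w : Word) (k : ℕ) :
    xIdx (psiX T w k) = (xIdx w).mapIdx fun i p =>
      if k + i ∈ T ∧ w.getD (p + 1) false = true then p + 1 else p := by
  induction w, k using psiX.induct T with
  | case1 => simp [psiX, xIdx]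
  | case4 w k hw ih =>
    have hw0 : w.getD 0 false = false := by rcases w with _ | ⟨_ | _, w⟩ <;> simp_all
    simp_all [psiX.eq_3 T k w hw, xIdx_cons, List.map_mapIdx, List.mapIdx_map, add_assoc,
      Nat.add_comm 1, ite_add]
  | _ => simp_all [psiX, xIdx_cons, List.map_mapIdx, List.mapIdx_map, add_assoc,
      Nat.add_comm 1, ite_add]

theorem mem_Ex {w : Word} {i : ℕ} :
    i ∈ Ex w ↔ i < w.count false ∧ w.getD ((xIdx w).getD i 0 + 1) false = true := by
  simp [Ex]

theorem getD_xIdx_psiX {T : Finset ℕ} {w : Word} (hT : T ⊆ Ex w) {i : ℕ}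
    (hi : i < w.count false) :
    (xIdx (psiX T w 0)).getD i 0 =
      if i ∈ T then (xIdx w).getD i 0 + 1 else (xIdx w).getD i 0 := by
  have hi' : i < (xIdx w).length := by rwa [length_xIdx]
  rw [xIdx_psiX, List.getD_eq_getElem _ _ (by simpa using hi'), List.getElem_mapIdx,
    ← List.getD_eq_getElem _ 0 hi', zero_add]
  by_cases h : i ∈ T
  · rw [if_pos ⟨h, (mem_Ex.1 (hT h)).2⟩, if_pos h]
  · rw [if_neg (fun hc => h hc.1), if_neg h]

theorem wle_refl (w : Word) : wle w w := ⟨rfl, rfl, fun _ _ => le_rfl⟩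

theorem length_eq_of_wle {w w0 : Word} (hle : wle w w0) : w.length = w0.length := by
  rw [← List.count_false_add_count_true, ← List.count_false_add_count_true, hle.1, hle.2.1]

noncomputable def ExBelow (w w0 : Word) : Finset ℕ :=
  (Ex w).filter fun i => (xIdx w).getD i 0 < (xIdx w0).getD i 0

theorem wle_psiX_iff {T : Finset ℕ} {w w0 : Word} (hT : T ⊆ Ex w) :
    wle (psiX T w 0) w0 ↔ wle w w0 ∧ T ⊆ ExBelow w w0 := by
  simp only [wle, count_psiX]
  constructor
  · rintro ⟨hx, hy, hpos⟩
    refine ⟨⟨hx, hy, fun i hi => ?_⟩, fun i hiT => ?_⟩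
    · have := hpos i hi
      rw [getD_xIdx_psiX hT hi] at this
      split at this <;> omega
    · have hi := (mem_Ex.1 (hT hiT)).1
      have := hpos i hi
      rw [getD_xIdx_psiX hT hi, if_pos hiT] at this
      exact Finset.mem_filter.2 ⟨hT hiT, this⟩
  · rintro ⟨⟨hx, hy, hpos⟩, hTS⟩
    refine ⟨hx, hy, fun i hi => ?_⟩
    rw [getD_xIdx_psiX hT hi]
    split_ifs with h
    · exact (Finset.mem_filter.1 (hTS h)).2
    · exact hpos i hi

theorem getD_xIdx_eq_of_notMem_ExBelow {w w0 : Word} (hle : wle w w0) {i : ℕ}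
    (hi : i < w.count false) (hiS : i ∉ ExBelow w w0)
    (hnext : i + 1 < w.count false → (xIdx w).getD (i + 1) 0 = (xIdx w0).getD (i + 1) 0) :
    (xIdx w).getD i 0 = (xIdx w0).getD i 0 := by
  refine (hle.2.2 i hi).eq_of_not_lt fun hlt => ?_
  have hiE : i ∉ Ex w := fun hiE => hiS (Finset.mem_filter.2 ⟨hiE, hlt⟩)
  set p := (xIdx w).getD i 0
  have hp0 : (xIdx w0).getD i 0 < w.length := by
    rw [length_eq_of_wle hle]
    exact (mem_xIdx.1 (getD_xIdx_mem (hle.1 ▸ hi))).1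
  have hnext_x : w.getD (p + 1) true = false := by
    have h : ¬w.getD (p + 1) false = true := fun h => hiE (mem_Ex.2 ⟨hi, h⟩)
    rw [List.getD_eq_getElem _ _ (by omega)] at h ⊢
    simpa using h
  obtain ⟨hsucc, hpsucc⟩ := getD_xIdx_succ_of_mem hi (mem_xIdx.2 ⟨by omega, hnext_x⟩)
  have := getD_xIdx_lt_getD_xIdx (lt_add_one i) (hle.1 ▸ hsucc)
  have := hnext hsucc
  omega

theorem ExBelow_eq_empty_iff {w w0 : Word} (hle : wle w w0) : ExBelow w w0 = ∅ ↔ w = w0 := by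
  refine ⟨fun hS => eq_of_xIdx_eq (length_eq_of_wle hle) ?_, ?_⟩
  · have hpos : ∀ i ≤ w.count false, i < w.count false →
        (xIdx w).getD i 0 = (xIdx w0).getD i 0 := fun i =>
      Nat.decreasingInduction (motive := fun i _ => i < w.count false → _)
        (fun _ _ ih hi => getD_xIdx_eq_of_notMem_ExBelow hle hi (by simp [hS]) ih)
        (fun h => absurd h (lt_irrefl _))
    refine List.ext_getElem (by rw [length_xIdx, length_xIdx, hle.1]) fun i hi hi0 => ?_
    rw [← List.getD_eq_getElem _ 0 hi, ← List.getD_eq_getElem _ 0 hi0]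
    rw [length_xIdx] at hi
    exact hpos i hi.le hi
  · rintro rfl
    exact Finset.filter_false_of_mem fun i _ => lt_irrefl _

noncomputable def formWith (K : Word → Word → ℤ) (w1 : Word) : FS →ₗ[ℤ] ℤ :=
  Finsupp.lift ℤ ℤ Word (K · w1)

theorem formWith_δ (K : Word → Word → ℤ) (w w1 : Word) : formWith K w1 (δ w) = K w w1 := by
  simp [formWith, δ]

theorem sum_sum_mul_eq_sum_formWith (K : Word → Word → ℤ) (u v : FS) :
    (u.sum fun w0 a => v.sum fun w1 b => a * b * K w0 w1) =
      v.sum fun w1 b => b * formWith K w1 u := by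
  rw [Finsupp.sum_comm]
  refine Finsupp.sum_congr fun w1 _ => ?_
  simp only [formWith, Finsupp.lift_apply, Finsupp.mul_sum, smul_eq_mul]
  exact Finsupp.sum_congr fun w0 _ => by ring

theorem pairF_δ_right (u : FS) (w0 : Word) : pairF u (δ w0) = formWith pairW w0 u := by
  rw [pairF, sum_sum_mul_eq_sum_formWith, δ, Finsupp.sum_single_index (zero_mul _), one_mul]

theorem pairF_QminusW_δ (w w0 : Word) :
    pairF (QminusW w) (δ w0) = if w = w0 then 1 else 0 := by
  have hterm : ∀ T ∈ (Ex w).powerset, (-1 : ℤ) ^ T.card * pairW (psiX T w 0) w0 =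
      if wle w w0 ∧ T ⊆ ExBelow w w0 then (-1) ^ T.card else 0 := fun T hT => by
    rw [pairW, wle_psiX_iff (Finset.mem_powerset.1 hT)]
    split_ifs <;> simp
  rw [pairF_δ_right, QminusW, map_sum]
  simp only [map_zsmul, formWith_δ, smul_eq_mul]
  rw [Finset.sum_congr rfl hterm]
  by_cases hle : wle w w0
  · have hsub : (ExBelow w w0).powerset ⊆ (Ex w).powerset :=
      Finset.powerset_mono.2 (Finset.filter_subset _ _)
    simp only [hle, true_and]
    rw [← Finset.sum_subset hsub fun T _ hT => if_neg (mt Finset.mem_powerset.2 hT),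
      Finset.sum_ite_of_true fun T hT => Finset.mem_powerset.1 hT,
      Finset.sum_powerset_neg_one_pow_card]
    exact if_congr (ExBelow_eq_empty_iff hle) rfl rfl
  · simp only [hle, false_and, if_false, Finset.sum_const_zero]
    rw [if_neg]
    rintro rfl
    exact hle (wle_refl w)

theorem opOf_δ (g : Word → FS) (w : Word) : opOf g (δ w) = g w := by
  simp [opOf, δ]

theorem formWith_pairW_comp_Qminus (w1 : Word) :
    (formWith pairW w1).comp Qminus = formWith dotW w1 := by
  refine Finsupp.lhom_ext' fun w => LinearMap.ext_ring ?_
  simp only [LinearMap.comp_apply, Finsupp.lsingle_apply]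
  rw [← δ, Qminus, opOf_δ, ← pairF_δ_right, pairF_QminusW_δ, formWith_δ, dotW]

/-- `⟨Q_- w | w0⟩ = 1` if `w = w0` and `0` otherwise; equivalently,
`Q_-` intertwines the Kronecker form with `⟨·|·⟩`: `u · v = ⟨Q_- u | v⟩`. -/
theorem stmt17 :
    (∀ w w0 : Word,
      pairF (QminusW w) (δ w0) = if w = w0 then 1 else 0) ∧
    (∀ u v : FS, dotF u v = pairF (Qminus u) v) := by
  refine ⟨pairF_QminusW_δ, fun u v => ?_⟩
  rw [dotF, pairF, sum_sum_mul_eq_sum_formWith, sum_sum_mul_eq_sum_formWith]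
  refine Finsupp.sum_congr fun w1 _ => ?_
  rw [← formWith_pairW_comp_Qminus, LinearMap.comp_apply]
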